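/- arXiv:2110.03988 — 5 statements merged into one kernel-verified Lean document; each statement's English description precedes it below -/
import Mathlib

section
/- Let (X,r) be a non-degenerate solution of the set-theoretic Yang–Baxter equation. Define x ∼ y iff L_x = L_y and R_x = R_y. If x ∼ x′, then for every y ∈ X: L_{R_y(x)} = L_{R_y(x′)} and R_{R_y(x)} = R_{R_y(x′)}; in particular R_y(x) ∼ R_y(x′). -/
/-- `r × id` on `X × X × X`. -/
def r1 {X : Type*} (r : X × X → X × X) : X × X × X → X × X × X :=
  fun p => ((r (p.1, p.2.1)).1, (r (p.1, p.2.1)).2, p.2.2)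

/-- `id × r` on `X × X × X`. -/
def r2 {X : Type*} (r : X × X → X × X) : X × X × X → X × X × X :=
  fun p => (p.1, r (p.2.1, p.2.2))

/-- The set-theoretic Yang–Baxter (braid) equation. -/
def IsYBE {X : Type*} (r : X × X → X × X) : Prop :=
  r1 r ∘ r2 r ∘ r1 r = r2 r ∘ r1 r ∘ r2 r

/-- Left translation `L_x`. -/
def Lmap {X : Type*} (r : X × X → X × X) (x y : X) : X := (r (x, y)).1

/-- Right translation `R_y`. -/
def Rmap {X : Type*} (r : X × X → X × X) (y x : X) : X := (r (x, y)).2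

theorem stmt6 {X : Type*} (r : X × X → X × X) (h : IsYBE r)
    (hL : ∀ x : X, Function.Bijective (Lmap r x))
    (hR : ∀ y : X, Function.Bijective (Rmap r y))
    (x x' : X) (hx : Lmap r x = Lmap r x' ∧ Rmap r x = Rmap r x') :
    ∀ y : X, Lmap r (Rmap r y x) = Lmap r (Rmap r y x') ∧
      Rmap r (Rmap r y x) = Rmap r (Rmap r y x') := by
  obtain ⟨hxL, hxR⟩ := hx
  have key : ∀ a b c : X, (r1 r ∘ r2 r ∘ r1 r) (a, b, c) = (r2 r ∘ r1 r ∘ r2 r) (a, b, c) :=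
    fun a b c => congrFun h (a, b, c)
  have eq1 : ∀ a b c : X,
      Lmap r (Lmap r a b) (Lmap r (Rmap r b a) c) = Lmap r a (Lmap r b c) := by
    intro a b c
    have := congrArg (fun p => p.1) (key a b c)
    simpa [r1, r2, Lmap, Rmap] using this
  have eq3 : ∀ a b c : X,
      Rmap r c (Rmap r b a) = Rmap r (Rmap r c b) (Rmap r (Lmap r b c) a) := by
    intro a b c
    have := congrArg (fun p => p.2.2) (key a b c)
    simpa [r1, r2, Lmap, Rmap] using this
  intro y
  constructor
  · funext z
    apply (hL (Lmap r x y)).1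
    calc Lmap r (Lmap r x y) (Lmap r (Rmap r y x) z) = Lmap r x (Lmap r y z) := eq1 x y z
      _ = Lmap r x' (Lmap r y z) := by rw [hxL]
      _ = Lmap r (Lmap r x' y) (Lmap r (Rmap r y x') z) := (eq1 x' y z).symm
      _ = Lmap r (Lmap r x y) (Lmap r (Rmap r y x') z) := by rw [hxL]
  · funext w
    obtain ⟨a, ha⟩ := (hR (Lmap r x y)).2 w
    calc Rmap r (Rmap r y x) w = Rmap r (Rmap r y x) (Rmap r (Lmap r x y) a) := by rw [ha]
      _ = Rmap r y (Rmap r x a) := (eq3 a x y).symm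
      _ = Rmap r y (Rmap r x' a) := by rw [hxR]
      _ = Rmap r (Rmap r y x') (Rmap r (Lmap r x' y) a) := eq3 a x' y
      _ = Rmap r (Rmap r y x') w := by rw [← hxL, ha]
end

section
/- Let (X,r) be a non-degenerate solution of the set-theoretic Yang–Baxter equation and ∼ the relation x ∼ y ⟺ (L_x = L_y and R_x = R_y). Then r descends to a well-defined map r̄ on (X/∼) × (X/∼) via r̄([x],[y]) = ([L_x(y)], [R_y(x)]), and (X/∼, r̄) is again a solution of the set-theoretic Yang–Baxter equation. -/
/-- The retract setoid: `x ∼ y` iff `L_x = L_y` and `R_x = R_y`. -/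
def retSetoid {X : Type*} (r : X × X → X × X) : Setoid X :=
  ⟨fun a b => Lmap r a = Lmap r b ∧ Rmap r a = Rmap r b,
    ⟨fun _ => ⟨rfl, rfl⟩, fun h => ⟨h.1.symm, h.2.symm⟩,
      fun h h' => ⟨h.1.trans h'.1, h.2.trans h'.2⟩⟩⟩

section Aux

variable {X : Type*} {r : X × X → X × X}

/-- The three component equations of the Yang–Baxter equation. -/
lemma ybe_comp (h : IsYBE r) (x y z : X) :
    Lmap r (Lmap r x y) (Lmap r (Rmap r y x) z) = Lmap r x (Lmap r y z) ∧
    Rmap r (Lmap r (Rmap r y x) z) (Lmap r x y)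
      = Lmap r (Rmap r (Lmap r y z) x) (Rmap r z y) ∧
    Rmap r z (Rmap r y x) = Rmap r (Rmap r z y) (Rmap r (Lmap r y z) x) := by
  have := congrFun h (x, y, z)
  simp only [Function.comp_apply, r1, r2, Prod.ext_iff, Lmap, Rmap] at this ⊢
  exact ⟨this.1, this.2.1, this.2.2⟩

variable (h : IsYBE r)
  (hL : ∀ x : X, Function.Bijective (Lmap r x))
  (hR : ∀ y : X, Function.Bijective (Rmap r y))
  {a a' : X} (hLa : Lmap r a = Lmap r a') (hRa : Rmap r a = Rmap r a')

include h hL hLa hRa in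
lemma keyLL (z : X) : Lmap r (Lmap r z a) = Lmap r (Lmap r z a') := by
  funext t
  obtain ⟨w, hw⟩ := (hL (Rmap r a z)).2 t
  calc Lmap r (Lmap r z a) t
      = Lmap r (Lmap r z a) (Lmap r (Rmap r a z) w) := by rw [hw]
    _ = Lmap r z (Lmap r a w) := (ybe_comp h z a w).1
    _ = Lmap r z (Lmap r a' w) := by rw [hLa]
    _ = Lmap r (Lmap r z a') (Lmap r (Rmap r a' z) w) := ((ybe_comp h z a' w).1).symm
    _ = Lmap r (Lmap r z a') t := by rw [← hRa, hw]

include h hR hRa in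
lemma keyRL (z : X) : Rmap r (Lmap r z a) = Rmap r (Lmap r z a') := by
  funext w
  apply (hR (Rmap r a z)).1
  calc Rmap r (Rmap r a z) (Rmap r (Lmap r z a) w)
      = Rmap r a (Rmap r z w) := ((ybe_comp h w z a).2.2).symm
    _ = Rmap r a' (Rmap r z w) := by rw [hRa]
    _ = Rmap r (Rmap r a' z) (Rmap r (Lmap r z a') w) := (ybe_comp h w z a').2.2
    _ = Rmap r (Rmap r a z) (Rmap r (Lmap r z a') w) := by rw [hRa]

include h hR hLa hRa in
lemma keyRR (z : X) : Rmap r (Rmap r z a) = Rmap r (Rmap r z a') := by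
  funext s
  obtain ⟨t, ht⟩ := (hR (Lmap r a z)).2 s
  calc Rmap r (Rmap r z a) s
      = Rmap r (Rmap r z a) (Rmap r (Lmap r a z) t) := by rw [ht]
    _ = Rmap r z (Rmap r a t) := ((ybe_comp h t a z).2.2).symm
    _ = Rmap r z (Rmap r a' t) := by rw [hRa]
    _ = Rmap r (Rmap r z a') (Rmap r (Lmap r a' z) t) := (ybe_comp h t a' z).2.2
    _ = Rmap r (Rmap r z a') s := by rw [← hLa, ht]

include h hL hLa in
lemma keyLR (z : X) : Lmap r (Rmap r z a) = Lmap r (Rmap r z a') := by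
  funext w
  apply (hL (Lmap r a z)).1
  calc Lmap r (Lmap r a z) (Lmap r (Rmap r z a) w)
      = Lmap r a (Lmap r z w) := (ybe_comp h a z w).1
    _ = Lmap r a' (Lmap r z w) := by rw [hLa]
    _ = Lmap r (Lmap r a' z) (Lmap r (Rmap r z a') w) := ((ybe_comp h a' z w).1).symm
    _ = Lmap r (Lmap r a z) (Lmap r (Rmap r z a') w) := by rw [hLa]

end Aux

theorem stmt7 {X : Type*} (r : X × X → X × X) (h : IsYBE r)
    (hL : ∀ x : X, Function.Bijective (Lmap r x))
    (hR : ∀ y : X, Function.Bijective (Rmap r y)) :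
    ∃ rbar : Quotient (retSetoid r) × Quotient (retSetoid r) →
        Quotient (retSetoid r) × Quotient (retSetoid r),
      (∀ x y : X,
        rbar (Quotient.mk (retSetoid r) x, Quotient.mk (retSetoid r) y) =
          (Quotient.mk (retSetoid r) (Lmap r x y),
           Quotient.mk (retSetoid r) (Rmap r y x))) ∧
      IsYBE rbar := by
  classical
  -- the underlying two-variable map into the quotient
  set Q := Quotient (retSetoid r)
  set mk : X → Q := Quotient.mk (retSetoid r) with hmk
  have hresp : ∀ (x y x' y' : X),
      (retSetoid r).r x x' → (retSetoid r).r y y' →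
      ((mk (Lmap r x y), mk (Rmap r y x)) : Q × Q)
        = (mk (Lmap r x' y'), mk (Rmap r y' x')) := by
    intro x y x' y' hx hy
    obtain ⟨hx1, hx2⟩ := hx
    obtain ⟨hy1, hy2⟩ := hy
    have h1 : mk (Lmap r x y) = mk (Lmap r x' y') := by
      have e : Lmap r x y = Lmap r x' y := by rw [hx1]
      rw [e]
      exact Quotient.sound ⟨keyLL h hL hy1 hy2 x', keyRL h hR hy2 x'⟩
    have h2 : mk (Rmap r y x) = mk (Rmap r y' x') := by
      have e : Rmap r y x' = Rmap r y' x' := by rw [hy2]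
      rw [← e]
      exact Quotient.sound ⟨keyLR h hL hx1 y, keyRR h hR hx1 hx2 y⟩
    rw [h1, h2]
  refine ⟨fun p => Quotient.lift₂
      (fun x y => ((mk (Lmap r x y), mk (Rmap r y x)) : Q × Q))
      hresp p.1 p.2, fun x y => rfl, ?_⟩
  set rbar : Q × Q → Q × Q := fun p => Quotient.lift₂
      (fun x y => ((mk (Lmap r x y), mk (Rmap r y x)) : Q × Q))
      hresp p.1 p.2 with hrbar
  have hr : ∀ x y : X, rbar (mk x, mk y) = (mk (Lmap r x y), mk (Rmap r y x)) :=
    fun x y => rfl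
  funext p
  obtain ⟨a, b, c⟩ := p
  refine Quotient.inductionOn₃ a b c fun x y z => ?_
  obtain ⟨e1, e2, e3⟩ := ybe_comp h x y z
  show r1 rbar (r2 rbar (r1 rbar (mk x, mk y, mk z)))
      = r2 rbar (r1 rbar (r2 rbar (mk x, mk y, mk z)))
  simp only [r1, r2, hr]
  rw [e1, e2, e3]
end

section
/- Let (X,r) be a finite solution and V = ℂ^X, with R : V⊗V → V⊗V the linearization of r. Then R ∘ τ = Σ_{[x],[y]} (L_{[x]} ∘ p_{[y]}) ⊗ (R_{[y]} ∘ p_{[x]}), where τ is the flip v⊗w ↦ w⊗v, the sums range over ∼-classes, L_{[x]}, R_{[y]} are the linearized left and right actions (well-defined on classes), and p_{[x]} is the projection onto the span of the class [x]. -/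
/-- The linear extension of `L_x` to `V = ℂ^X`, sending `e_y ↦ e_{L_x y}`. -/
noncomputable def Lop {X : Type*} (r : X × X → X × X) (x : X) :
    (X →₀ ℂ) →ₗ[ℂ] (X →₀ ℂ) :=
  Finsupp.lmapDomain ℂ ℂ (Lmap r x)

/-- The linear extension of `R_y` to `V = ℂ^X`, sending `e_x ↦ e_{R_y x}`. -/
noncomputable def Rop {X : Type*} (r : X × X → X × X) (y : X) :
    (X →₀ ℂ) →ₗ[ℂ] (X →₀ ℂ) :=
  Finsupp.lmapDomain ℂ ℂ (Rmap r y)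

open Classical in
/-- The projection onto the span of the `∼`-class of `z`. -/
noncomputable def pcl {X : Type*} [Fintype X] (r : X × X → X × X) (z : X) :
    (X →₀ ℂ) →ₗ[ℂ] (X →₀ ℂ) :=
  ∑ w : X, if (retSetoid r).r w z then Finsupp.lsingle w ∘ₗ Finsupp.lapply w else 0

open TensorProduct in
/-- The linearization `R : V ⊗ V → V ⊗ V` of `r`, sending
`e_x ⊗ e_y ↦ e_{L_x y} ⊗ e_{R_y x}`. -/
noncomputable def Rlin {X : Type*} (r : X × X → X × X) :
    ((X →₀ ℂ) ⊗[ℂ] (X →₀ ℂ)) →ₗ[ℂ] ((X →₀ ℂ) ⊗[ℂ] (X →₀ ℂ)) :=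
  (finsuppTensorFinsupp' ℂ X X).symm.toLinearMap ∘ₗ
    Finsupp.lmapDomain ℂ ℂ r ∘ₗ (finsuppTensorFinsupp' ℂ X X).toLinearMap


/-! Evaluate both sides on the basis tensors `e_y ⊗ e_x`. The projections kill every summand
except the one indexed by `([x], [y])`, and on that summand `L_{[x]}` and `R_{[y]}` act as
`L_x` and `R_y` because these depend only on the `∼`-class. -/

open TensorProduct

section
variable {X : Type*} (r : X × X → X × X)

theorem Lop_single (x y : X) (k : ℂ) :
    Lop r x (Finsupp.single y k) = Finsupp.single (Lmap r x y) k := by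
  simp [Lop]

theorem Rop_single (y x : X) (k : ℂ) :
    Rop r y (Finsupp.single x k) = Finsupp.single (Rmap r y x) k := by
  simp [Rop]

theorem Lmap_out_mk (x : X) : Lmap r (Quotient.mk (retSetoid r) x).out = Lmap r x :=
  (Quotient.mk_out (s := retSetoid r) x).1

theorem Rmap_out_mk (x : X) : Rmap r (Quotient.mk (retSetoid r) x).out = Rmap r x :=
  (Quotient.mk_out (s := retSetoid r) x).2

theorem Rlin_single_tmul_single (x y : X) :
    Rlin r (Finsupp.single x (1 : ℂ) ⊗ₜ Finsupp.single y 1) =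
      Finsupp.single (Lmap r x y) 1 ⊗ₜ Finsupp.single (Rmap r y x) 1 := by
  simp [Rlin, finsuppTensorFinsupp'_symm_single_eq_single_one_tmul, Lmap, Rmap]

variable [Fintype X]

open Classical in
theorem pcl_single (z w : X) (k : ℂ) :
    pcl r z (Finsupp.single w k) =
      if (retSetoid r).r w z then Finsupp.single w k else 0 := by
  rw [pcl, LinearMap.sum_apply, Finset.sum_eq_single w]
  · split_ifs <;> simp
  · intro v _ hv
    split_ifs <;> simp [Ne.symm hv]
  · simp

open Classical in
theorem pcl_out_single (c : Quotient (retSetoid r)) (w : X) (k : ℂ) :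
    pcl r c.out (Finsupp.single w k) =
      if Quotient.mk _ w = c then Finsupp.single w k else 0 := by
  rw [pcl_single]
  exact if_congr Quotient.mk_eq_iff_out.symm rfl rfl

open Classical in
theorem map_Lop_pcl_Rop_pcl_single_tmul_single
    (c : Quotient (retSetoid r) × Quotient (retSetoid r)) (x y : X) :
    map (Lop r c.1.out ∘ₗ pcl r c.2.out) (Rop r c.2.out ∘ₗ pcl r c.1.out)
        (Finsupp.single y (1 : ℂ) ⊗ₜ Finsupp.single x 1) =
      if (Quotient.mk _ x, Quotient.mk _ y) = c then
        Finsupp.single (Lmap r x y) 1 ⊗ₜ Finsupp.single (Rmap r y x) 1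
      else 0 := by
  obtain ⟨a, b⟩ := c
  simp only [map_tmul, LinearMap.comp_apply, pcl_out_single]
  by_cases hx : Quotient.mk _ x = a <;> by_cases hy : Quotient.mk _ y = b
  · subst hx hy
    simp [Lop_single, Rop_single, Lmap_out_mk, Rmap_out_mk]
  all_goals simp [hx, hy]

end

open Classical TensorProduct in
theorem stmt13_general {X : Type*} [Fintype X] (r : X × X → X × X) :
    Rlin r ∘ₗ (TensorProduct.comm ℂ (X →₀ ℂ) (X →₀ ℂ)).toLinearMap =
      ∑ c : Quotient (retSetoid r) × Quotient (retSetoid r),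
        TensorProduct.map (Lop r c.1.out ∘ₗ pcl r c.2.out)
          (Rop r c.2.out ∘ₗ pcl r c.1.out) := by
  refine (Finsupp.basisSingleOne.tensorProduct Finsupp.basisSingleOne).ext fun ⟨y, x⟩ => ?_
  simp only [Module.Basis.tensorProduct_apply', Finsupp.coe_basisSingleOne, LinearMap.comp_apply,
    LinearEquiv.coe_coe, comm_tmul, Rlin_single_tmul_single, LinearMap.sum_apply,
    map_Lop_pcl_Rop_pcl_single_tmul_single, Fintype.sum_ite_eq]

open Classical TensorProduct in
theorem stmt13 {X : Type*} [Fintype X] (r : X × X → X × X) (h : IsYBE r) :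
    Rlin r ∘ₗ (TensorProduct.comm ℂ (X →₀ ℂ) (X →₀ ℂ)).toLinearMap =
      ∑ c : Quotient (retSetoid r) × Quotient (retSetoid r),
        TensorProduct.map (Lop r c.1.out ∘ₗ pcl r c.2.out)
          (Rop r c.2.out ∘ₗ pcl r c.1.out) :=
  stmt13_general r
end

section
/- Let (X,r) be a finite non-degenerate solution of the set-theoretic Yang–Baxter equation. The following are equivalent: (a) the retraction Ret(X,r) is the trivial (flip) solution; (b) the span of {L_{[x]}, R_{[x]}, p_{[x]} : [x] ∈ X/∼} is an abelian Lie subalgebra of 𝔤𝔩(V); (c) the Lie algebra 𝔤(X,r) generated by {L_{[x]}∘p_{[y]}, R_{[x]}∘p_{[y]}} is abelian. -/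
/-- Generators of the Lie algebra `𝔤(X,r)`: the operators
`L_{[x]} ∘ p_{[y]}` and `R_{[x]} ∘ p_{[y]}`. -/
def lieGens {X : Type*} [Fintype X] (r : X × X → X × X) :
    Set (Module.End ℂ (X →₀ ℂ)) :=
  {T | ∃ x y : X, T = Lop r x ∘ₗ pcl r y ∨ T = Rop r x ∘ₗ pcl r y}

/-- The set `{L_{[x]}, R_{[x]}, p_{[x]}}`. -/
def opSet {X : Type*} [Fintype X] (r : X × X → X × X) :
    Set (Module.End ℂ (X →₀ ℂ)) :=
  {T | ∃ x : X, T = Lop r x ∨ T = Rop r x ∨ T = pcl r x}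

attribute [local instance 100] LieRing.ofAssociativeRing

-- The bracket on `Module.End` elaborates through the `LieRingModule` structure of linear maps,
-- which `commute_iff_lie_eq` does not match syntactically.
theorem Module.End.lie_eq_zero_iff_commute {R M : Type*} [CommRing R] [AddCommGroup M]
    [Module R M] (A B : Module.End R M) : ⁅A, B⁆ = 0 ↔ Commute A B :=
  commute_iff_lie_eq.symm

theorem Submodule.forall_mem_span_commute_iff {R A : Type*} [CommSemiring R] [Semiring A]
    [Algebra R A] {s : Set A} :
    (∀ a ∈ span R s, ∀ b ∈ span R s, Commute a b) ↔ ∀ a ∈ s, ∀ b ∈ s, Commute a b :=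
  ⟨fun h _ ha _ hb => h _ (subset_span ha) _ (subset_span hb), fun h _ ha _ hb =>
    Algebra.commute_of_mem_adjoin_of_forall_mem_commute (Algebra.span_le_adjoin R s hb)
      fun _ hc => (Algebra.commute_of_mem_adjoin_of_forall_mem_commute
        (Algebra.span_le_adjoin R s ha) fun _ hd => h _ hc _ hd).symm⟩

namespace Finsupp

variable {X R : Type*} [CommSemiring R]

theorem lmapDomain_single_one (f : X → X) (a : X) :
    lmapDomain R R f (single a 1) = single (f a) (1 : R) := by
  simp [lmapDomain_apply]

theorem commute_of_single_one {A B : Module.End R (X →₀ R)}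
    (h : ∀ a : X, A (B (single a 1)) = B (A (single a 1))) : Commute A B :=
  lhom_ext' fun a => LinearMap.ext_ring (h a)

theorem commute_lmapDomain {f g : X → X} (hfg : Function.Commute f g) :
    Commute (lmapDomain R R f) (lmapDomain R R g) := by
  simp only [Commute, SemiconjBy, Module.End.mul_eq_comp, ← lmapDomain_comp, hfg.comp_eq]

end Finsupp

def IsRetractTrivial {X : Type*} (r : X × X → X × X) : Prop :=
  ∀ x y : X, (retSetoid r).r (Lmap r x y) y ∧ (retSetoid r).r (Rmap r y x) x

section Retract

variable {X : Type*} {r : X × X → X × X}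

theorem IsRetractTrivial.lmap_rel (hP : IsRetractTrivial r) (x a : X) :
    (retSetoid r).r (Lmap r x a) a :=
  (hP x a).1

theorem IsRetractTrivial.rmap_rel (hP : IsRetractTrivial r) (y a : X) :
    (retSetoid r).r (Rmap r y a) a :=
  (hP a y).2

end Retract

namespace IsYBE

variable {X : Type*} {r : X × X → X × X}

theorem lmap_lmap (h : IsYBE r) (x y z : X) :
    Lmap r (Lmap r x y) (Lmap r (Rmap r y x) z) = Lmap r x (Lmap r y z) :=
  congrArg (fun p => p.1) (congrFun h (x, y, z))

theorem rmap_lmap (h : IsYBE r) (x y z : X) :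
    Rmap r (Lmap r (Rmap r y x) z) (Lmap r x y) =
      Lmap r (Rmap r (Lmap r y z) x) (Rmap r z y) :=
  congrArg (fun p => p.2.1) (congrFun h (x, y, z))

theorem rmap_rmap (h : IsYBE r) (x y z : X) :
    Rmap r z (Rmap r y x) = Rmap r (Rmap r z y) (Rmap r (Lmap r y z) x) :=
  congrArg (fun p => p.2.2) (congrFun h (x, y, z))

variable (h : IsYBE r) (hP : IsRetractTrivial r)
include h hP

theorem commute_lmap_lmap (x y : X) : Function.Commute (Lmap r x) (Lmap r y) := by
  intro z
  have := h.lmap_lmap y x z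
  rwa [(hP.lmap_rel y x).1, (hP.rmap_rel x y).1] at this

theorem commute_rmap_rmap (y z : X) : Function.Commute (Rmap r y) (Rmap r z) := by
  intro x
  have := h.rmap_rmap x y z
  rwa [(hP.rmap_rel z y).2, (hP.lmap_rel y z).2, eq_comm] at this

theorem commute_lmap_rmap (x z : X) : Function.Commute (Lmap r x) (Rmap r z) := by
  intro y
  have := h.rmap_lmap x y z
  rwa [(hP.rmap_rel y x).1, (hP.lmap_rel x z).2, (hP.lmap_rel y z).2, (hP.rmap_rel z x).1,
    eq_comm] at this

end IsYBE

section Operators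

open Finsupp

variable {X : Type*} [Fintype X] {r : X × X → X × X}

open Classical in
theorem pcl_single_one (z u : X) :
    pcl r z (single u 1) = if (retSetoid r).r u z then single u 1 else 0 := by
  rw [pcl, LinearMap.sum_apply, Finset.sum_eq_single u]
  · split_ifs <;> simp
  · intro w _ hw
    split_ifs <;> simp [single_eq_of_ne' hw.symm]
  · simp

theorem commute_lmapDomain_pcl {f : X → X} (hf : ∀ a, (retSetoid r).r (f a) a) (z : X) :
    Commute (lmapDomain ℂ ℂ f) (pcl r z) := by
  refine commute_of_single_one fun a => ?_
  have hfa : (retSetoid r).r (f a) z ↔ (retSetoid r).r a z :=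
    ⟨(retSetoid r).trans ((retSetoid r).symm (hf a)), (retSetoid r).trans (hf a)⟩
  by_cases ha : (retSetoid r).r a z
  · simp [pcl_single_one, ha, hfa.mpr ha]
  · simp [pcl_single_one, ha, mt hfa.mp ha]

theorem commute_pcl_pcl (z w : X) : Commute (pcl r z) (pcl r w) := by
  refine commute_of_single_one fun a => ?_
  simp only [pcl_single_one]
  split_ifs <;> simp [pcl_single_one, *]

theorem commute_lmapDomain_comp_pcl {f g : X → X} (hf : ∀ a, (retSetoid r).r (f a) a)
    (hg : ∀ a, (retSetoid r).r (g a) a) (hfg : Function.Commute f g) (y y' : X) :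
    Commute (lmapDomain ℂ ℂ f ∘ₗ pcl r y) (lmapDomain ℂ ℂ g ∘ₗ pcl r y') :=
  ((commute_lmapDomain hfg).mul_right (commute_lmapDomain_pcl hf y')).mul_left
    ((commute_lmapDomain_pcl hg y).symm.mul_right (commute_pcl_pcl y y'))

theorem rel_of_commute_lmapDomain_pcl {f : X → X} {y : X}
    (h : Commute (lmapDomain ℂ ℂ f) (pcl r y)) : (retSetoid r).r (f y) y := by
  have := LinearMap.congr_fun h (single y 1)
  rw [Module.End.mul_apply, Module.End.mul_apply, pcl_single_one, if_pos ((retSetoid r).refl y),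
    lmapDomain_single_one, pcl_single_one] at this
  split_ifs at this with hy
  · exact hy
  · simp at this

theorem rel_of_commute_lmapDomain_comp_pcl {f : X → X} {y : X}
    (h : Commute (lmapDomain ℂ ℂ f ∘ₗ pcl r (f y)) (lmapDomain ℂ ℂ f ∘ₗ pcl r y)) :
    (retSetoid r).r (f y) y := by
  have := LinearMap.congr_fun h (single y 1)
  simp only [Module.End.mul_apply, LinearMap.comp_apply] at this
  rw [pcl_single_one y, if_pos ((retSetoid r).refl y), lmapDomain_single_one, pcl_single_one,
    if_pos ((retSetoid r).refl (f y)), pcl_single_one] at this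
  split_ifs at this with hy
  · exact (retSetoid r).symm hy
  · simp at this

theorem opSet_commute_iff (h : IsYBE r) :
    (∀ A ∈ opSet r, ∀ B ∈ opSet r, Commute A B) ↔ IsRetractTrivial r := by
  refine ⟨fun hc x y => ⟨?_, ?_⟩, fun hP => ?_⟩
  · exact rel_of_commute_lmapDomain_pcl (hc _ ⟨x, .inl rfl⟩ _ ⟨y, .inr (.inr rfl)⟩)
  · exact rel_of_commute_lmapDomain_pcl (hc _ ⟨y, .inr (.inl rfl)⟩ _ ⟨x, .inr (.inr rfl)⟩)
  have hLp x z : Commute (Lop r x) (pcl r z) := commute_lmapDomain_pcl (hP.lmap_rel x) z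
  have hRp y z : Commute (Rop r y) (pcl r z) := commute_lmapDomain_pcl (hP.rmap_rel y) z
  have hLR x y : Commute (Lop r x) (Rop r y) := commute_lmapDomain (h.commute_lmap_rmap hP x y)
  rintro _ ⟨x, rfl | rfl | rfl⟩ _ ⟨y, rfl | rfl | rfl⟩
  · exact commute_lmapDomain (h.commute_lmap_lmap hP x y)
  · exact hLR x y
  · exact hLp x y
  · exact (hLR y x).symm
  · exact commute_lmapDomain (h.commute_rmap_rmap hP x y)
  · exact hRp x y
  · exact (hLp y x).symm
  · exact (hRp y x).symm
  · exact commute_pcl_pcl x y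

theorem lieGens_commute_iff (h : IsYBE r) :
    (∀ A ∈ lieGens r, ∀ B ∈ lieGens r, Commute A B) ↔ IsRetractTrivial r := by
  refine ⟨fun hc x y => ⟨?_, ?_⟩, fun hP => ?_⟩
  · exact rel_of_commute_lmapDomain_comp_pcl (hc _ ⟨x, _, .inl rfl⟩ _ ⟨x, y, .inl rfl⟩)
  · exact rel_of_commute_lmapDomain_comp_pcl (hc _ ⟨y, _, .inr rfl⟩ _ ⟨y, x, .inr rfl⟩)
  rintro _ ⟨x, y, rfl | rfl⟩ _ ⟨x', y', rfl | rfl⟩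
  · exact commute_lmapDomain_comp_pcl (hP.lmap_rel x) (hP.lmap_rel x')
      (h.commute_lmap_lmap hP x x') y y'
  · exact commute_lmapDomain_comp_pcl (hP.lmap_rel x) (hP.rmap_rel x')
      (h.commute_lmap_rmap hP x x') y y'
  · exact commute_lmapDomain_comp_pcl (hP.rmap_rel x) (hP.lmap_rel x')
      (h.commute_lmap_rmap hP x' x).symm y y'
  · exact commute_lmapDomain_comp_pcl (hP.rmap_rel x) (hP.rmap_rel x')
      (h.commute_rmap_rmap hP x x') y y'

end Operators

theorem stmt15_general {X : Type*} [Fintype X] (r : X × X → X × X) (h : IsYBE r) :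
    ((∀ x y : X, (retSetoid r).r (Lmap r x y) y ∧ (retSetoid r).r (Rmap r y x) x) ↔
      (∀ A ∈ Submodule.span ℂ (opSet r), ∀ B ∈ Submodule.span ℂ (opSet r),
        ⁅A, B⁆ = 0)) ∧
    ((∀ A ∈ Submodule.span ℂ (opSet r), ∀ B ∈ Submodule.span ℂ (opSet r),
        ⁅A, B⁆ = 0) ↔
      IsLieAbelian (LieSubalgebra.lieSpan ℂ (Module.End ℂ (X →₀ ℂ)) (lieGens r))) := by
  simp only [Module.End.lie_eq_zero_iff_commute, Submodule.forall_mem_span_commute_iff,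
    LieSubalgebra.isLieAbelian_lieSpan_iff, ← commute_iff_lie_eq, opSet_commute_iff h,
    lieGens_commute_iff h, and_true]
  exact Iff.rfl

theorem stmt15 {X : Type*} [Fintype X] (r : X × X → X × X) (h : IsYBE r)
    (hL : ∀ x : X, Function.Bijective (Lmap r x))
    (hR : ∀ y : X, Function.Bijective (Rmap r y)) :
    ((∀ x y : X, (retSetoid r).r (Lmap r x y) y ∧ (retSetoid r).r (Rmap r y x) x) ↔
      (∀ A ∈ Submodule.span ℂ (opSet r), ∀ B ∈ Submodule.span ℂ (opSet r),
        ⁅A, B⁆ = 0)) ∧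
    ((∀ A ∈ Submodule.span ℂ (opSet r), ∀ B ∈ Submodule.span ℂ (opSet r),
        ⁅A, B⁆ = 0) ↔
      IsLieAbelian (LieSubalgebra.lieSpan ℂ (Module.End ℂ (X →₀ ℂ)) (lieGens r))) :=
  stmt15_general r h
end

section
/- Let (X,r) be a solution with r(x,y) = (L_x(y), R_y(x)), and suppose the retraction Ret(X,r) is a permutation solution given by f, g on X/∼ (i.e., [x]▹[y] = f([y]) and [x]◃[y] = g([x])). Then for all x, y, z ∈ X: L_x ∘ L_y = L_{f([y])} ∘ L_{g([x])}, R_z ∘ R_y = R_{g([y])} ∘ R_{f([z])}, and R_{f([z])} ∘ L_x = L_{g([x])} ∘ R_z, where L and R applied to a class means the common value on that class. -/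
theorem stmt16 {X : Type*} (r : X × X → X × X) (h : IsYBE r)
    (f g : Quotient (retSetoid r) → Quotient (retSetoid r))
    (hf : ∀ x y : X, Quotient.mk (retSetoid r) (Lmap r x y) =
      f (Quotient.mk (retSetoid r) y))
    (hg : ∀ x y : X, Quotient.mk (retSetoid r) (Rmap r y x) =
      g (Quotient.mk (retSetoid r) x)) :
    ∀ x y z : X,
      Lmap r x ∘ Lmap r y =
        Lmap r (f (Quotient.mk (retSetoid r) y)).out ∘
          Lmap r (g (Quotient.mk (retSetoid r) x)).out ∧
      Rmap r z ∘ Rmap r y =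
        Rmap r (g (Quotient.mk (retSetoid r) y)).out ∘
          Rmap r (f (Quotient.mk (retSetoid r) z)).out ∧
      Rmap r (f (Quotient.mk (retSetoid r) z)).out ∘ Lmap r x =
        Lmap r (g (Quotient.mk (retSetoid r) x)).out ∘ Rmap r z := by
  have key : ∀ p : X × X × X, r1 r (r2 r (r1 r p)) = r2 r (r1 r (r2 r p)) :=
    fun p => congrFun h p
  have hLout : ∀ (a : X) (q : Quotient (retSetoid r)),
      Quotient.mk (retSetoid r) a = q → Lmap r a = Lmap r q.out := by
    intro a q hq
    exact (Quotient.exact (hq.trans q.out_eq.symm)).1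
  have hRout : ∀ (a : X) (q : Quotient (retSetoid r)),
      Quotient.mk (retSetoid r) a = q → Rmap r a = Rmap r q.out := by
    intro a q hq
    exact (Quotient.exact (hq.trans q.out_eq.symm)).2
  have e1 : ∀ x y z : X,
      Lmap r (Lmap r x y) (Lmap r (Rmap r y x) z) = Lmap r x (Lmap r y z) := by
    intro x y z
    have := key (x, y, z)
    simp only [r1, r2, Lmap, Rmap, Prod.ext_iff] at this ⊢
    exact this.1
  have e2 : ∀ x y z : X,
      Rmap r (Lmap r (Rmap r y x) z) (Lmap r x y)
        = Lmap r (Rmap r (Lmap r y z) x) (Rmap r z y) := by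
    intro x y z
    have := key (x, y, z)
    simp only [r1, r2, Lmap, Rmap, Prod.ext_iff] at this ⊢
    exact this.2.1
  have e3 : ∀ x y z : X,
      Rmap r z (Rmap r y x) = Rmap r (Rmap r z y) (Rmap r (Lmap r y z) x) := by
    intro x y z
    have := key (x, y, z)
    simp only [r1, r2, Lmap, Rmap, Prod.ext_iff] at this ⊢
    exact this.2.2
  intro x y z
  refine ⟨funext fun w => ?_, funext fun w => ?_, funext fun w => ?_⟩
  · have h1 := hLout (Lmap r x y) _ (hf x y)
    have h2 := hLout (Rmap r y x) _ (hg x y)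
    calc Lmap r x (Lmap r y w)
        = Lmap r (Lmap r x y) (Lmap r (Rmap r y x) w) := (e1 x y w).symm
      _ = Lmap r (f (Quotient.mk (retSetoid r) y)).out
            (Lmap r (g (Quotient.mk (retSetoid r) x)).out w) := by rw [h1, h2]
  · have h1 := hRout (Rmap r z y) _ (hg y z)
    have h2 := hRout (Lmap r y z) _ (hf y z)
    calc Rmap r z (Rmap r y w)
        = Rmap r (Rmap r z y) (Rmap r (Lmap r y z) w) := e3 w y z
      _ = Rmap r (g (Quotient.mk (retSetoid r) y)).out
            (Rmap r (f (Quotient.mk (retSetoid r) z)).out w) := by rw [h1, h2]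
  · have h2 := hLout (Rmap r (Lmap r w z) x) _ (hg x (Lmap r w z))
    calc Rmap r (f (Quotient.mk (retSetoid r) z)).out (Lmap r x w)
        = Rmap r (Lmap r (Rmap r w x) z) (Lmap r x w) := by
          rw [← (hRout (Lmap r (Rmap r w x) z) _ (hf (Rmap r w x) z))]
      _ = Lmap r (Rmap r (Lmap r w z) x) (Rmap r z w) := e2 x w z
      _ = Lmap r (g (Quotient.mk (retSetoid r) x)).out (Rmap r z w) := by rw [h2]
end
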